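/- Let a, b, c ∈ ℝ with a² + b² + c² = 1, a − b − c ≥ −1, b − a − c ≥ −1, and 2c(c+1) ≥ 2ab + 1. Then the 4×4 complex matrix ρ̃ = (1/4)·(1₄ + (1/2)·σ₃⊗1₂ + (1/2)·1₂⊗σ₃ + a·σ₁⊗σ₂ + b·σ₂⊗σ₁ + c·σ₃⊗σ₃) is positive semidefinite (and has trace 1), i.e. it is a two-qubit density matrix. -/

import Mathlib

open Matrix Complex BigOperators Kronecker
open scoped ComplexOrder

/-- The three Pauli matrices σ₁, σ₂, σ₃ (indexed by `Fin 3`). -/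
noncomputable def pauli : Fin 3 → Matrix (Fin 2) (Fin 2) ℂ
  | 0 => !![0, 1; 1, 0]
  | 1 => !![0, -Complex.I; Complex.I, 0]
  | 2 => !![1, 0; 0, -1]

/-- The state `ρ̃ = (1/4)(1₄ + (1/2) σ₃⊗1 + (1/2) 1⊗σ₃ + a σ₁⊗σ₂ + b σ₂⊗σ₁ + c σ₃⊗σ₃)`. -/
noncomputable def rhoTilde (a b c : ℝ) : Matrix (Fin 2 × Fin 2) (Fin 2 × Fin 2) ℂ :=
  (1 / 4 : ℂ) • ((1 : Matrix (Fin 2 × Fin 2) (Fin 2 × Fin 2) ℂ)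
    + (1 / 2 : ℂ) • (pauli 2 ⊗ₖ (1 : Matrix (Fin 2) (Fin 2) ℂ))
    + (1 / 2 : ℂ) • ((1 : Matrix (Fin 2) (Fin 2) ℂ) ⊗ₖ pauli 2)
    + (a : ℂ) • (pauli 0 ⊗ₖ pauli 1)
    + (b : ℂ) • (pauli 1 ⊗ₖ pauli 0)
    + (c : ℂ) • (pauli 2 ⊗ₖ pauli 2))

/-!
ρ̃ is an X-state: ordering the basis as |00⟩, |11⟩, |01⟩, |10⟩ makes it block diagonal, with
blocks `(1/4)[[2 + c, -i(a + b)], [i(a + b), c]]` and `(1/4)[[1 - c, i(a - b)], [-i(a - b), 1 - c]]`.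
A Hermitian 2×2 matrix with nonnegative diagonal is positive semidefinite as soon as its
determinant is nonnegative, so it suffices that `(a + b)² ≤ c(2 + c)` with `c ≥ 0`, which is
`a² + b² + c² = 1` combined with `2c(c + 1) ≥ 2ab + 1`, and that `|a - b| ≤ 1 - c`, which are the
two linear constraints.
-/

namespace Matrix

theorem PosSemidef.blockDiagonal {m o R : Type*} [Fintype m] [Fintype o] [DecidableEq o]
    [Ring R] [PartialOrder R] [StarRing R] [AddLeftMono R]
    {M : o → Matrix m m R} (hM : ∀ k, (M k).PosSemidef) :
    (Matrix.blockDiagonal M).PosSemidef := by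
  refine PosSemidef.of_dotProduct_mulVec_nonneg ?_ fun x => ?_
  · rw [IsHermitian, blockDiagonal_conjTranspose]
    exact congrArg Matrix.blockDiagonal (funext fun k => (hM k).isHermitian)
  · have hsplit : star x ⬝ᵥ (Matrix.blockDiagonal M *ᵥ x) =
        ∑ k, star (fun i => x (i, k)) ⬝ᵥ (M k *ᵥ fun i => x (i, k)) := by
      simp only [dotProduct, Pi.star_apply, mulVec, blockDiagonal_apply, ite_mul, zero_mul,
        Fintype.sum_prod_type, Finset.sum_ite_eq, Finset.mem_univ, ↓reduceIte, Finset.mul_sum]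
      exact Finset.sum_comm
    rw [hsplit]
    exact Finset.sum_nonneg fun k _ => (hM k).dotProduct_mulVec_nonneg _

theorem posSemidef_fin_two_of_normSq_le {p q : ℝ} {z : ℂ} (hp : 0 ≤ p) (hq : 0 ≤ q)
    (hz : normSq z ≤ p * q) : !![(p : ℂ), z; star z, (q : ℂ)].PosSemidef := by
  refine PosSemidef.of_dotProduct_mulVec_nonneg ?_ fun x => ?_
  · ext i j
    fin_cases i <;> fin_cases j <;> simp
  · set u := x 0
    set v := x 1
    set w := star u * z * v
    have hform : star x ⬝ᵥ (!![(p : ℂ), z; star z, (q : ℂ)] *ᵥ x) =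
        ((p * normSq u + q * normSq v + 2 * w.re : ℝ) : ℂ) := by
      apply Complex.ext <;>
        simp [dotProduct, mulVec, Fin.sum_univ_two, normSq_apply, u, v, w] <;> ring
    have hw : w.re * w.re ≤ (p * normSq u) * (q * normSq v) :=
      calc w.re * w.re ≤ normSq w := re_sq_le_normSq w
        _ = normSq u * normSq z * normSq v := by simp [w, normSq_mul]
        _ ≤ normSq u * (p * q) * normSq v := by gcongr <;> exact normSq_nonneg _
        _ = (p * normSq u) * (q * normSq v) := by ring
    rw [hform, zero_le_real]
    nlinarith [sq_nonneg (p * normSq u - q * normSq v), mul_nonneg hp (normSq_nonneg u),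
      mul_nonneg hq (normSq_nonneg v)]

end Matrix

theorem trace_pauli (i : Fin 3) : (pauli i).trace = 0 := by
  fin_cases i <;> simp [pauli, trace]

theorem trace_rhoTilde (a b c : ℝ) : (rhoTilde a b c).trace = 1 := by
  simp [rhoTilde, trace_kronecker, trace_pauli]

/-- Block index `i + j` (the parity of `|ij⟩`) and position `i` inside the block. -/
def parityBlock (ij : Fin 2 × Fin 2) : Fin 2 × Fin 2 := (ij.1, ij.1 + ij.2)

theorem rhoTilde_eq_submatrix_blockDiagonal (a b c : ℝ) :
    rhoTilde a b c = (1 / 4 : ℂ) • (blockDiagonal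
      ![!![((2 + c : ℝ) : ℂ), -((a + b : ℝ) * I); star (-((a + b : ℝ) * I)), (c : ℂ)],
        !![((1 - c : ℝ) : ℂ), (a - b : ℝ) * I; star ((a - b : ℝ) * I), ((1 - c : ℝ) : ℂ)]]).submatrix
      parityBlock parityBlock := by
  ext ⟨i, j⟩ ⟨k, l⟩
  fin_cases i <;> fin_cases j <;> fin_cases k <;> fin_cases l <;>
    simp [rhoTilde, pauli, parityBlock, blockDiagonal_apply, one_apply] <;> ring

/-- Under the stated constraints on `a, b, c`, the matrix `ρ̃` is positive
semidefinite and has trace 1, i.e. it is a two-qubit density matrix. -/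
theorem rhoTilde_is_density (a b c : ℝ)
    (hnorm : a ^ 2 + b ^ 2 + c ^ 2 = 1)
    (h1 : a - b - c ≥ -1) (h2 : b - a - c ≥ -1)
    (h3 : 2 * c * (c + 1) ≥ 2 * a * b + 1) :
    (rhoTilde a b c).PosSemidef ∧ (rhoTilde a b c).trace = 1 := by
  have hsum : (a + b) * (a + b) ≤ (2 + c) * c := by nlinarith
  have hc : 0 ≤ c := by nlinarith [mul_self_nonneg (a + b)]
  have hdiff : (a - b) * (a - b) ≤ (1 - c) * (1 - c) := by nlinarith
  refine ⟨?_, trace_rhoTilde a b c⟩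
  rw [rhoTilde_eq_submatrix_blockDiagonal]
  refine PosSemidef.smul ((PosSemidef.blockDiagonal fun k => ?_).submatrix _) (by positivity)
  fin_cases k
  · refine posSemidef_fin_two_of_normSq_le (by linarith) hc ?_
    rwa [normSq_neg, normSq_mul, normSq_I, mul_one, normSq_ofReal]
  · refine posSemidef_fin_two_of_normSq_le (by linarith) (by linarith) ?_
    rwa [normSq_mul, normSq_I, mul_one, normSq_ofReal]
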